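/- Let G be a connected multigraph with exactly one cycle C = (v_0, ..., v_{n-1}, v_0), let x_1 = v_k and x_2 be distinct vertices of V(C)\{v_0}, and let y ∈ V(G⟨v_0⟩)\{v_0}. For i = 1,2, let p_i ∈ [1, min{res(x_i), res(y)}] and H_i = G + p_i·x_i y. If H_1 and H_2 are isomorphic, then x_2 = v_{n−k}. -/

import Mathlib

structure CMGraph (V S : Type) where
  mul : V → V → ℕ
  symm : ∀ u v, mul u v = mul v u
  loopless : ∀ v, mul v v = 0
  col : V → S

namespace CMGraph

variable {V V' S : Type}

def toSimple (G : CMGraph V S) : SimpleGraph V where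
  Adj u v := 0 < G.mul u v
  symm := by constructor; intro u v h; rwa [G.symm v u]
  loopless := by constructor; intro v h; simp [G.loopless] at h

def CycleEdge (G : CMGraph V S) (e : Sym2 V) : Prop :=
  ∃ (w : V) (c : G.toSimple.Walk w w), c.IsCycle ∧ e ∈ c.edges

def OnAllCycles (G : CMGraph V S) (v : V) : Prop :=
  ∀ (w : V) (c : G.toSimple.Walk w w), c.IsCycle → v ∈ c.support

def cycleVerts (G : CMGraph V S) : Set V :=
  {v | ∃ (w : V) (c : G.toSimple.Walk w w), c.IsCycle ∧ v ∈ c.support}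

def Connected (G : CMGraph V S) : Prop := G.toSimple.Connected

def IsKAugTree (G : CMGraph V S) (k : ℕ) : Prop :=
  G.Connected ∧ G.toSimple.edgeSet.ncard = (Nat.card V - 1) + k

def Monocyclic (G : CMGraph V S) : Prop :=
  G.Connected ∧ ∃ (w : V) (c : G.toSimple.Walk w w), c.IsCycle ∧
    ∀ (w' : V) (c' : G.toSimple.Walk w' w'), c'.IsCycle →
      {e | e ∈ c'.edges} = {e | e ∈ c.edges}

def OnCommonCycle (G : CMGraph V S) (u v : V) : Prop :=
  ∃ (w : V) (c : G.toSimple.Walk w w), c.IsCycle ∧ u ∈ c.support ∧ v ∈ c.support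

def IsBlock (G : CMGraph V S) (X : Set V) : Prop :=
  (∀ u ∈ X, ∀ v ∈ X, u ≠ v → G.OnCommonCycle u v) ∧
  ∀ Y : Set V, X ⊆ Y → (∀ u ∈ Y, ∀ v ∈ Y, u ≠ v → G.OnCommonCycle u v) → Y = X

def MonoBlock (G : CMGraph V S) : Prop :=
  ∃! X : Set V, G.IsBlock X ∧ 2 ≤ X.ncard

def IsMB2AT (G : CMGraph V S) : Prop := G.IsKAugTree 2 ∧ G.MonoBlock

def IsJunction (G : CMGraph V S) (v : V) : Prop :=
  v ∈ G.cycleVerts ∧ G.OnAllCycles v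

def deg (G : CMGraph V S) [Fintype V] (v : V) : ℕ := ∑ u, G.mul v u

def res (G : CMGraph V S) [Fintype V] (val : S → ℕ) (v : V) : ℕ :=
  val (G.col v) - G.deg v

def addMul (G : CMGraph V S) [DecidableEq V] (x y : V) (p : ℕ) (hxy : x ≠ y) :
    CMGraph V S where
  mul u v := if (u = x ∧ v = y) ∨ (u = y ∧ v = x) then G.mul u v + p else G.mul u v
  symm := by
    intro u v
    try dsimp only
    by_cases h : (u = x ∧ v = y) ∨ (u = y ∧ v = x)
    · rw [if_pos h, if_pos (by tauto)]
      try rw [G.symm u v]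
    · rw [if_neg h, if_neg (by tauto)]
      try rw [G.symm u v]
  loopless := by
    intro v
    try dsimp only
    have h1 : ¬((v = x ∧ v = y) ∨ (v = y ∧ v = x)) := by
      rintro (⟨h1, h2⟩ | ⟨h1, h2⟩)
      · exact hxy (h1.symm.trans h2)
      · exact hxy (h2.symm.trans h1)
    rw [if_neg h1, G.loopless]
  col := G.col

def removePair (G : CMGraph V S) [DecidableEq V] (x y : V) : CMGraph V S where
  mul u v := if (u = x ∧ v = y) ∨ (u = y ∧ v = x) then 0 else G.mul u v
  symm := by
    intro u v
    try dsimp only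
    by_cases h : (u = x ∧ v = y) ∨ (u = y ∧ v = x)
    · rw [if_pos h, if_pos (by tauto)]
      try rw [G.symm u v]
    · rw [if_neg h, if_neg (by tauto)]
      try rw [G.symm u v]
  loopless := by
    intro v
    try dsimp only
    by_cases h : (v = x ∧ v = y) ∨ (v = y ∧ v = x)
    · simp [h]
    · simp [h, G.loopless]
  col := G.col

def delCyc (G : CMGraph V S) : SimpleGraph V :=
  G.toSimple.deleteEdges {e | G.CycleEdge e}

def pend (G : CMGraph V S) (v : V) : Set V := {u | G.delCyc.Reachable v u}

def subAt (G : CMGraph V S) (v0 u : V) : Set V :=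
  {w | w ∈ G.pend v0 ∧ ∀ p : G.delCyc.Walk v0 w, p.IsPath → u ∈ p.support}

def ParentIn (G : CMGraph V S) (v0 z u : V) : Prop :=
  G.delCyc.Adj z u ∧ u ∈ G.subAt v0 z ∧ u ≠ v0

def Avoids (G : CMGraph V S) {u v w : V} (p : G.toSimple.Walk u v)
    (c : G.toSimple.Walk w w) : Prop :=
  p.IsPath ∧ ∀ e ∈ p.edges, e ∉ c.edges

end CMGraph

def CMIso {V V' S : Type} (G : CMGraph V S) (G' : CMGraph V' S) : Prop :=
  ∃ ψ : V ≃ V', (∀ v, G'.col (ψ v) = G.col v) ∧ ∀ u v, G'.mul (ψ u) (ψ v) = G.mul u v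

/-!
Let `x = v_k`, and let `d` be the distance from `v_0` to `y` in the pendant tree. The cycles of
`G + p·xy` are `C` and the cycles through `xy`. Each cycle through `xy` is `xy` plus an `x`–`y`
path of `G`. Removing any edge of `C` leaves an acyclic graph, where paths are unique. So such
a path goes along one of the two arcs of `C` from `x` to `v_0` and then down the tree to `y`.
The cycle lengths are therefore exactly `n`, `k + d + 1` and `n - k + d + 1`. An isomorphism
preserves the set of cycle lengths, so if `x_2 = v_j` with `j ≠ k`, then `j = n - k`.
-/

namespace SimpleGraph

variable {V W : Type*} {G : SimpleGraph V}

def cycleLengths (G : SimpleGraph V) : Set ℕ :=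
  {n | ∃ (u : V) (p : G.Walk u u), p.IsCycle ∧ p.length = n}

theorem Embedding.cycleLengths_subset {G' : SimpleGraph W} (f : G ↪g G') :
    G.cycleLengths ⊆ G'.cycleLengths := by
  rintro _ ⟨u, p, hp, rfl⟩
  exact ⟨f u, p.map f.toHom, (Walk.isCycle_map_iff_of_injective f.injective).mpr hp,
    p.length_map _⟩

theorem Iso.cycleLengths_eq {G' : SimpleGraph W} (φ : G ≃g G') :
    G.cycleLengths = G'.cycleLengths :=
  φ.toEmbedding.cycleLengths_subset.antisymm φ.symm.toEmbedding.cycleLengths_subset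

namespace Walk

theorem IsCycle.exists_isPath_of_mem_edges [DecidableEq V] {u x y : V} {Z : G.Walk u u}
    (hZ : Z.IsCycle) (h : s(x, y) ∈ Z.edges) :
    ∃ P : G.Walk x y, P.IsPath ∧ s(x, y) ∉ P.edges ∧ Z.length = P.length + 1 := by
  suffices key : ∀ R : G.Walk x x, R.IsCycle → R.snd = y →
      ∃ P : G.Walk x y, P.IsPath ∧ s(x, y) ∉ P.edges ∧ R.length = P.length + 1 by
    have hx := Z.fst_mem_support_of_mem_edges h
    have hR := hZ.rotate hx
    have hy : y ∈ (Z.rotate x hx).toSubgraph.neighborSet x :=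
      adj_toSubgraph_iff_mem_edges.mpr ((Z.rotate_edges x hx).mem_iff.mpr h)
    rw [hR.neighborSet_toSubgraph_endpoint] at hy
    rw [← Z.length_rotate x hx]
    rcases hy with hy | hy
    · exact key _ hR hy.symm
    · simpa using key _ hR.reverse (by rw [snd_reverse, hy])
  rintro (_ | ⟨hadj, T⟩) hR hy
  · exact absurd hR not_isCycle_nil
  · rw [snd_cons] at hy
    subst hy
    obtain ⟨hT, hxT⟩ := (cons_isCycle_iff T hadj).mp hR
    exact ⟨T.reverse, hT.reverse, by simpa [Sym2.eq_swap] using hxT, by simp⟩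

theorem pos_and_lt_length_of_getVert_ne {v : V} (p : G.Walk v v) {k : ℕ} (h : p.getVert k ≠ v) :
    0 < k ∧ k < p.length := by
  refine ⟨Nat.pos_of_ne_zero ?_, lt_of_not_ge ?_⟩
  · rintro rfl
    exact h p.getVert_zero
  · intro hk
    exact h (p.getVert_of_length_le hk)

theorem mem_edges_drop_getVert {u v : V} (p : G.Walk u v) {i : ℕ} (hi : i < p.length) :
    s(p.getVert i, p.getVert (i + 1)) ∈ (p.drop i).edges := by
  have := (p.drop i).toSubgraph_adj_getVert (i := 0) (by rw [drop_length]; omega)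
  simpa [adj_toSubgraph_iff_mem_edges, drop_getVert] using this

theorem mem_edges_take_getVert {u v : V} (p : G.Walk u v) {i : ℕ} (hi0 : 0 < i)
    (hi : i ≤ p.length) : s(p.getVert (i - 1), p.getVert i) ∈ (p.take i).edges := by
  have := (p.take i).toSubgraph_adj_getVert (i := i - 1) (by rw [take_length]; omega)
  rw [adj_toSubgraph_iff_mem_edges, take_getVert, take_getVert, Nat.sub_add_cancel hi0] at this
  simpa [Nat.min_eq_right (Nat.sub_le i 1)] using this

theorem IsTrail.disjoint_edges_take_drop {u v : V} {p : G.Walk u v} (hp : p.IsTrail) (n : ℕ) :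
    (p.take n).edges.Disjoint (p.drop n).edges := by
  rw [edges_take, edges_drop]
  exact List.disjoint_take_drop hp.edges_nodup le_rfl

theorem mem_edgeSet_of_mem_edges_sup_edge {x y a b : V} {W : (G ⊔ edge x y).Walk a b}
    (hW : s(x, y) ∉ W.edges) {e : Sym2 V} (he : e ∈ W.edges) : e ∈ G.edgeSet := by
  rcases (edgeSet_sup G (edge x y)) ▸ W.edges_subset_edgeSet he with h | h
  · exact h
  · exact absurd (Set.mem_singleton_iff.mp (edgeSet_edge_subset h) ▸ he) hW

theorem length_add_one_mem_cycleLengths_sup_edge {x y : V} (hxy : x ≠ y) (hadj : ¬ G.Adj x y)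
    {P : G.Walk x y} (hP : P.IsPath) : P.length + 1 ∈ (G ⊔ edge x y).cycleLengths := by
  have hyx : (G ⊔ edge x y).Adj y x := Or.inr (by simp [edge_adj, hxy.symm])
  refine ⟨y, cons hyx (P.mapLe le_sup_left), ?_, by simp⟩
  rw [cons_isCycle_iff, edges_mapLe_eq_edges, Sym2.eq_swap]
  exact ⟨hP.mapLe _, fun h => hadj (P.adj_of_mem_edges h)⟩

structure IsUniqueCycle {v : V} (c : G.Walk v v) : Prop where
  isCycle : c.IsCycle
  edgeSet_eq : ∀ (w : V) (c' : G.Walk w w), c'.IsCycle → c'.edgeSet = c.edgeSet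

namespace IsUniqueCycle

variable {v : V} {c : G.Walk v v}

theorem mem_edges_iff (hc : c.IsUniqueCycle) {w : V} {Z : G.Walk w w} (hZ : Z.IsCycle)
    {e : Sym2 V} : e ∈ Z.edges ↔ e ∈ c.edges :=
  Set.ext_iff.mp (hc.edgeSet_eq w Z hZ) e

theorem length_eq (hc : c.IsUniqueCycle) {w : V} {Z : G.Walk w w} (hZ : Z.IsCycle) :
    Z.length = c.length := by
  rw [← length_edges, ← length_edges]
  exact ((List.perm_ext_iff_of_nodup hZ.edges_nodup hc.isCycle.edges_nodup).mpr
    fun _ => hc.mem_edges_iff hZ).length_eq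

theorem isAcyclic_deleteEdges (hc : c.IsUniqueCycle) {e : Sym2 V} (he : e ∈ c.edges) :
    (G.deleteEdges {e}).IsAcyclic := by
  intro w Z hZ
  have heZ : e ∈ Z.edges := by
    rw [← edges_mapLe_eq_edges (G.deleteEdges_le {e})]
    exact (hc.mem_edges_iff (hZ.mapLe _)).mpr he
  simpa using Z.edges_subset_edgeSet heZ

theorem eq_of_isPath (hc : c.IsUniqueCycle) {e : Sym2 V} (he : e ∈ c.edges) {a b : V}
    {p q : G.Walk a b} (hp : p.IsPath) (hq : q.IsPath) (hpe : e ∉ p.edges)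
    (hqe : e ∉ q.edges) : p = q := by
  have := ((hc.isAcyclic_deleteEdges he).subsingleton_path a b).elim
    ⟨p.toDeleteEdge e hpe, IsPath.toDeleteEdges _ _ hp _⟩
    ⟨q.toDeleteEdge e hqe, IsPath.toDeleteEdges _ _ hq _⟩
  simpa using congrArg (fun r => r.1.map (.ofLE (G.deleteEdges_le {e}))) this

theorem eq_start_of_mem_support [DecidableEq V] (hc : c.IsUniqueCycle) {u : V} (W : G.Walk v u)
    (hW : ∀ e ∈ W.edges, e ∉ c.edges) (hu : u ∈ c.support) : u = v := by
  obtain ⟨i, rfl, -⟩ := mem_support_iff_exists_getVert.mp hu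
  by_contra hne
  obtain ⟨hi0, hin⟩ := c.pos_and_lt_length_of_getVert_ne hne
  have hnext := c.mem_edges_drop_getVert hin
  have hbypass : W.bypass = c.take i :=
    hc.eq_of_isPath ((c.isSubwalk_drop i).edges_subset hnext) W.bypass_isPath
      (hc.isCycle.isPath_take hin)
      (fun h => hW _ (W.edges_bypass_subset_edges h) ((c.isSubwalk_drop i).edges_subset hnext))
      (hc.isCycle.isTrail.disjoint_edges_take_drop i · hnext)
  have hprev := c.mem_edges_take_getVert hi0 hin.le
  exact hW _ (W.edges_bypass_subset_edges (hbypass ▸ hprev))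
    ((c.isSubwalk_take i).edges_subset hprev)

theorem isPath_append [DecidableEq V] (hc : c.IsUniqueCycle) {u y : V} {A : G.Walk u v}
    {Q : G.Walk v y} (hA : A.IsPath) (hAc : A.support ⊆ c.support) (hQ : Q.IsPath)
    (hQc : ∀ e ∈ Q.edges, e ∉ c.edges) : (A.append Q).IsPath := by
  rw [isPath_def, support_append, List.nodup_append]
  refine ⟨hA.support_nodup, hQ.support_nodup.sublist Q.support.tail_sublist, ?_⟩
  rintro w hwA _ hwQ rfl
  have hwQ' := List.mem_of_mem_tail hwQ
  obtain rfl := hc.eq_start_of_mem_support (Q.takeUntil w hwQ')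
    (fun e he => hQc e (Q.edges_takeUntil_subset_edges hwQ' he)) (hAc hwA)
  have := hQ.support_nodup
  rw [← Q.cons_tail_support] at this
  exact (List.nodup_cons.mp this).1 hwQ

theorem isPath_take_reverse_append [DecidableEq V] (hc : c.IsUniqueCycle) {k : ℕ}
    (hkn : k < c.length) {y : V} {Q : G.Walk v y} (hQ : Q.IsPath)
    (hQc : ∀ e ∈ Q.edges, e ∉ c.edges) : ((c.take k).reverse.append Q).IsPath :=
  hc.isPath_append (hc.isCycle.isPath_take hkn).reverse
    (by simpa using (c.isSubwalk_take k).support_subset) hQ hQc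

theorem isPath_drop_append [DecidableEq V] (hc : c.IsUniqueCycle) {k : ℕ} (hk0 : 0 < k)
    {y : V} {Q : G.Walk v y} (hQ : Q.IsPath) (hQc : ∀ e ∈ Q.edges, e ∉ c.edges) :
    ((c.drop k).append Q).IsPath :=
  hc.isPath_append (hc.isCycle.isPath_drop hk0) (c.isSubwalk_drop k).support_subset hQ hQc

theorem not_adj_of_mem_support [DecidableEq V] (hc : c.IsUniqueCycle) {x y : V}
    (hx : x ∈ c.support) (hxv : x ≠ v) (hyv : y ≠ v) (Q : G.Walk v y)
    (hQc : ∀ e ∈ Q.edges, e ∉ c.edges) : ¬ G.Adj x y := by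
  intro hadj
  have hyx : s(y, x) ∉ c.edges := fun h =>
    hyv (hc.eq_start_of_mem_support Q hQc (c.fst_mem_support_of_mem_edges h))
  refine hxv (hc.eq_start_of_mem_support (Q.concat hadj.symm) ?_ hx)
  simpa [edges_concat, or_imp, forall_and] using ⟨hQc, hyx⟩

theorem length_eq_of_isPath [DecidableEq V] (hc : c.IsUniqueCycle) {k : ℕ} (hk0 : 0 < k)
    (hkn : k < c.length) {y : V} {Q : G.Walk v y} (hQ : Q.IsPath)
    (hQc : ∀ e ∈ Q.edges, e ∉ c.edges) {P : G.Walk (c.getVert k) y} (hP : P.IsPath) :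
    P.length = k + Q.length ∨ P.length = c.length - k + Q.length := by
  have hprev := c.mem_edges_take_getVert hk0 hkn.le
  have hnext := c.mem_edges_drop_getVert hkn
  have hdisj := hc.isCycle.isTrail.disjoint_edges_take_drop k
  have hP1 : s(c.getVert (k - 1), c.getVert k) ∉ P.edges ∨
      s(c.getVert k, c.getVert (k + 1)) ∉ P.edges := by
    -- a path leaves its start along a single edge, but `x` has two distinct neighbours on `c`
    by_contra! ⟨hprevP, hnextP⟩
    rw [Sym2.eq_swap] at hprevP
    apply hc.isCycle.getVert_sub_one_ne_getVert_add_one hkn.le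
    rw [← hP.snd_of_toSubgraph_adj (adj_toSubgraph_iff_mem_edges.mpr hprevP),
      hP.snd_of_toSubgraph_adj (adj_toSubgraph_iff_mem_edges.mpr hnextP)]
  rcases hP1 with h | h
  · right
    have : P = (c.drop k).append Q :=
      hc.eq_of_isPath ((c.isSubwalk_take k).edges_subset hprev) hP
        (hc.isPath_drop_append hk0 hQ hQc) h (by
          simpa [edges_append] using
            ⟨hdisj hprev, fun h => hQc _ h ((c.isSubwalk_take k).edges_subset hprev)⟩)
    rw [this, length_append, drop_length]
  · left
    have : P = (c.take k).reverse.append Q :=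
      hc.eq_of_isPath ((c.isSubwalk_drop k).edges_subset hnext) hP
        (hc.isPath_take_reverse_append hkn hQ hQc) h (by
          simpa [edges_append] using
            ⟨(hdisj · hnext), fun h => hQc _ h ((c.isSubwalk_drop k).edges_subset hnext)⟩)
    rw [this, length_append, length_reverse, take_length, Nat.min_eq_left hkn.le]

theorem cycleLengths_sup_edge [DecidableEq V] (hc : c.IsUniqueCycle) {k : ℕ} (hk0 : 0 < k)
    (hkn : k < c.length) {y : V} (hyv : y ≠ v) {Q : G.Walk v y} (hQ : Q.IsPath)
    (hQc : ∀ e ∈ Q.edges, e ∉ c.edges) :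
    (G ⊔ edge (c.getVert k) y).cycleLengths =
      {c.length, k + Q.length + 1, c.length - k + Q.length + 1} := by
  have hx := c.getVert_mem_support k
  have hxv : c.getVert k ≠ v := by
    rw [Ne, hc.isCycle.getVert_endpoint_iff hkn.le]
    omega
  have hxy : c.getVert k ≠ y := fun h => hyv (hc.eq_start_of_mem_support Q hQc (h ▸ hx))
  have hadj := hc.not_adj_of_mem_support hx hxv hyv Q hQc
  ext n
  constructor
  · rintro ⟨u, Z, hZ, rfl⟩
    by_cases h : s(c.getVert k, y) ∈ Z.edges
    · obtain ⟨P, hP, hPe, hlen⟩ := hZ.exists_isPath_of_mem_edges h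
      have := hc.length_eq_of_isPath hk0 hkn hQ hQc
        (hP.transfer fun _ => mem_edgeSet_of_mem_edges_sup_edge hPe)
      simp only [length_transfer] at this
      simp only [Set.mem_insert_iff, Set.mem_singleton_iff]
      omega
    · left
      simpa using hc.length_eq (hZ.transfer fun _ => mem_edgeSet_of_mem_edges_sup_edge h)
  · rintro (rfl | rfl | rfl)
    · exact ⟨v, c.mapLe le_sup_left, hc.isCycle.mapLe _, length_mapLe _ _⟩
    · simpa [take_length, Nat.min_eq_left hkn.le] using
        length_add_one_mem_cycleLengths_sup_edge hxy hadj
          (hc.isPath_take_reverse_append hkn hQ hQc)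
    · simpa [drop_length] using
        length_add_one_mem_cycleLengths_sup_edge hxy hadj (hc.isPath_drop_append hk0 hQ hQc)

end IsUniqueCycle
end Walk
end SimpleGraph

open SimpleGraph

namespace CMGraph

variable {V S : Type}

theorem toSimple_addMul [DecidableEq V] (G : CMGraph V S) {x y : V} {p : ℕ} (hxy : x ≠ y)
    (hp : 0 < p) : (G.addMul x y p hxy).toSimple = G.toSimple ⊔ edge x y := by
  ext u v
  simp only [toSimple, addMul, sup_adj, edge_adj]
  split_ifs with h
  · have : u ≠ v := by
      rintro rfl
      rcases h with ⟨rfl, rfl⟩ | ⟨rfl, rfl⟩ <;> exact hxy rfl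
    simpa [this, h] using Nat.add_pos_right _ hp
  · simp [h]

theorem delCyc_eq (G : CMGraph V S) {v : V} {c : G.toSimple.Walk v v} (hc : c.IsUniqueCycle) :
    G.delCyc = G.toSimple.deleteEdges c.edgeSet := by
  unfold delCyc
  congr 1
  ext e
  exact ⟨fun ⟨_, _, hZ, he⟩ => (hc.mem_edges_iff hZ).mp he, fun he => ⟨v, c, hc.isCycle, he⟩⟩

theorem exists_isPath_of_mem_pend [DecidableEq V] (G : CMGraph V S) {v y : V}
    {c : G.toSimple.Walk v v} (hc : c.IsUniqueCycle) (hy : y ∈ G.pend v) :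
    ∃ Q : G.toSimple.Walk v y, Q.IsPath ∧ ∀ e ∈ Q.edges, e ∉ c.edges := by
  obtain ⟨W⟩ : (G.toSimple.deleteEdges c.edgeSet).Reachable v y := G.delCyc_eq hc ▸ hy
  refine ⟨W.bypass.mapLe (G.toSimple.deleteEdges_le _), W.bypass_isPath.mapLe _, fun e he => ?_⟩
  rw [Walk.edges_mapLe_eq_edges] at he
  exact (edgeSet_deleteEdges .. ▸ W.bypass.edges_subset_edgeSet he).2

end CMGraph

theorem CMIso.nonempty_iso_toSimple {V V' S : Type} {G : CMGraph V S} {G' : CMGraph V' S}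
    (h : CMIso G G') : Nonempty (G.toSimple ≃g G'.toSimple) := by
  obtain ⟨ψ, -, hmul⟩ := h
  exact ⟨⟨ψ, fun {u v} => show 0 < G'.mul (ψ u) (ψ v) ↔ 0 < G.mul u v by rw [hmul]⟩⟩

theorem isomorphic_additions_symmetric_position_general {V S : Type}
    [DecidableEq V] (G : CMGraph V S)
    (v0 : V) (c : G.toSimple.Walk v0 v0) (hc : c.IsCycle)
    (huniq : ∀ (w : V) (c' : G.toSimple.Walk w w), c'.IsCycle →
      {e | e ∈ c'.edges} = {e | e ∈ c.edges})
    (k : ℕ)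
    (x1 x2 : V) (hx1 : x1 = c.getVert k) (hx1v : x1 ≠ v0)
    (hx2 : x2 ∈ c.support) (hx2v : x2 ≠ v0) (hx12 : x1 ≠ x2)
    (y : V) (hy : y ∈ G.pend v0) (hyv : y ≠ v0)
    (p1 p2 : ℕ)
    (hxy1 : x1 ≠ y) (hxy2 : x2 ≠ y)
    (hp1 : 1 ≤ p1)
    (hp2 : 1 ≤ p2)
    (hiso : CMIso (G.addMul x1 y p1 hxy1) (G.addMul x2 y p2 hxy2)) :
    x2 = c.getVert (c.length - k) := by
  have hcu : c.IsUniqueCycle := ⟨hc, huniq⟩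
  obtain ⟨Q, hQ, hQc⟩ := G.exists_isPath_of_mem_pend hcu hy
  obtain ⟨j, rfl, -⟩ := Walk.mem_support_iff_exists_getVert.mp hx2
  subst hx1
  obtain ⟨hk0, hkn⟩ := c.pos_and_lt_length_of_getVert_ne hx1v
  obtain ⟨hj0, hjn⟩ := c.pos_and_lt_length_of_getVert_ne hx2v
  obtain ⟨φ⟩ := hiso.nonempty_iso_toSimple
  have hlen := φ.cycleLengths_eq
  rw [G.toSimple_addMul hxy1 hp1, G.toSimple_addMul hxy2 hp2,
    hcu.cycleLengths_sup_edge hk0 hkn hyv hQ hQc,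
    hcu.cycleLengths_sup_edge hj0 hjn hyv hQ hQc] at hlen
  have hj : j + Q.length + 1 ∈ ({c.length, k + Q.length + 1, c.length - k + Q.length + 1} :
      Set ℕ) := hlen ▸ by simp
  have hk : k + Q.length + 1 ∈ ({c.length, j + Q.length + 1, c.length - j + Q.length + 1} :
      Set ℕ) := hlen ▸ by simp
  have hjk : j ≠ k := by
    rintro rfl
    exact hx12 rfl
  simp only [Set.mem_insert_iff, Set.mem_singleton_iff] at hj hk
  rw [show j = c.length - k by omega]

/-- If G + p₁·x₁y and G + p₂·x₂y are isomorphic, with x₁ = v_k on the unique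
cycle, then x₂ = v_{n−k}. -/
theorem isomorphic_additions_symmetric_position {V S : Type} [Fintype V]
    [DecidableEq V] (G : CMGraph V S) (val : S → ℕ)
    (hcon : G.Connected)
    (v0 : V) (c : G.toSimple.Walk v0 v0) (hc : c.IsCycle)
    (huniq : ∀ (w : V) (c' : G.toSimple.Walk w w), c'.IsCycle →
      {e | e ∈ c'.edges} = {e | e ∈ c.edges})
    (k : ℕ) (hk0 : 0 < k) (hkn : k < c.length)
    (x1 x2 : V) (hx1 : x1 = c.getVert k) (hx1v : x1 ≠ v0)
    (hx2 : x2 ∈ c.support) (hx2v : x2 ≠ v0) (hx12 : x1 ≠ x2)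
    (y : V) (hy : y ∈ G.pend v0) (hyv : y ≠ v0)
    (p1 p2 : ℕ)
    (hxy1 : x1 ≠ y) (hxy2 : x2 ≠ y)
    (hna1 : G.mul x1 y = 0) (hna2 : G.mul x2 y = 0)
    (hp1 : 1 ≤ p1) (hp1' : p1 ≤ min (G.res val x1) (G.res val y))
    (hp2 : 1 ≤ p2) (hp2' : p2 ≤ min (G.res val x2) (G.res val y))
    (hiso : CMIso (G.addMul x1 y p1 hxy1) (G.addMul x2 y p2 hxy2)) :
    x2 = c.getVert (c.length - k) :=
  isomorphic_additions_symmetric_position_general G v0 c hc huniq k x1 x2 hx1 hx1v hx2 hx2v hx12 y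
    hy hyv p1 p2 hxy1 hxy2 hp1 hp2 hiso
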